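/- Let σ(x) = Sigmoid(x) = 1/(1+exp(−x)) or σ(x) = tanh(x), and let f_N(x) = Σ_{k=1}^m s_k·σ(⟨a_k,x⟩+b_k) + c be a shallow analytic network on ℝ^d. Then f_N is admissible (that is, s_k·a_k ≠ 0 for all k ∈ {1,…,m} and (a_{k_1}, b_{k_1}) ≠ ε·(a_{k_2}, b_{k_2}) for all ε ∈ {−1,+1} and all 1 ≤ k_1 < k_2 ≤ m) if and only if f_N is irreducible (no shallow network with the same activation σ and fewer than m neurons agrees with f_N at every point of ℝ^d). -/

import Mathlib

open Finset

/-- The logistic sigmoid function. -/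
noncomputable def sigmoid (x : ℝ) : ℝ := 1 / (1 + Real.exp (-x))

/-- Dot product on `ℝ^d`. -/
noncomputable def dotp {d : ℕ} (a x : Fin d → ℝ) : ℝ := ∑ i, a i * x i

/-- A shallow network with activation `σ` and `m` neurons. -/
noncomputable def shallowNet {d m : ℕ} (σ : ℝ → ℝ) (a : Fin m → Fin d → ℝ)
    (b s : Fin m → ℝ) (c : ℝ) (x : Fin d → ℝ) : ℝ :=
  (∑ k, s k * σ (dotp (a k) x + b k)) + c

/-- `f`, viewed as a network with activation `σ` and `m` neurons, is irreducible: no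
shallow network with activation `σ` and fewer than `m` neurons agrees with `f`
everywhere. -/
def IrreducibleShallow {d : ℕ} (σ : ℝ → ℝ) (m : ℕ) (f : (Fin d → ℝ) → ℝ) : Prop :=
  ¬ ∃ m' < m, ∃ (a : Fin m' → Fin d → ℝ) (b s : Fin m' → ℝ) (c : ℝ),
    ∀ x, shallowNet σ a b s c x = f x

section AuxiliaryLemmas

open Filter





lemma one_add_exp_pos (u : ℝ) : 0 < 1 + Real.exp u := by positivity

lemma sigmoid_eq (u : ℝ) : sigmoid u = Real.exp u / (1 + Real.exp u) := by
  unfold sigmoid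
  rw [Real.exp_neg]
  have h1 : (0:ℝ) < Real.exp u := Real.exp_pos u
  have h2 : (0:ℝ) < 1 + (Real.exp u)⁻¹ := by positivity
  have h3 : (0:ℝ) < 1 + Real.exp u := by positivity
  field_simp
  ring

lemma sigmoid_neg (u : ℝ) : sigmoid (-u) = 1 - sigmoid u := by
  rw [sigmoid_eq, sigmoid_eq, Real.exp_neg]
  have h1 : (0:ℝ) < Real.exp u := Real.exp_pos u
  have h3 : (0:ℝ) < 1 + Real.exp u := by positivity
  have h2 : (0:ℝ) < 1 + (Real.exp u)⁻¹ := by positivity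
  field_simp
  ring

lemma sigmoid_zero : sigmoid 0 = 1/2 := by
  unfold sigmoid; norm_num

lemma tanh_eq_sigmoid (u : ℝ) : Real.tanh u = 2 * sigmoid (2*u) - 1 := by
  rw [Real.tanh_eq_sinh_div_cosh, Real.sinh_eq, Real.cosh_eq, sigmoid_eq]
  have h1 : (0:ℝ) < Real.exp u := Real.exp_pos u
  have h2 : (0:ℝ) < Real.exp (-u) := Real.exp_pos _
  have h3 : (0:ℝ) < 1 + Real.exp (2*u) := by positivity
  have h4 : Real.exp u + Real.exp (-u) > 0 := by positivity
  have he : Real.exp (2*u) = Real.exp u * Real.exp u := by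
    rw [two_mul, Real.exp_add]
  have he2 : Real.exp (-u) = (Real.exp u)⁻¹ := Real.exp_neg u
  rw [he, he2]
  field_simp
  ring

-- sign-flip identity covering both activations
lemma sigma_neg {σ : ℝ → ℝ} (hσ : σ = sigmoid ∨ σ = Real.tanh) (u : ℝ) :
    σ (-u) = 2 * σ 0 - σ u := by
  rcases hσ with h | h <;> subst h
  · rw [sigmoid_neg, sigmoid_zero]; ring
  · rw [Real.tanh_neg, Real.tanh_zero]; ring

-- geometric expansion of sigmoid with remainder
lemma sigmoid_expansion (u : ℝ) (N : ℕ) :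
    sigmoid u = (∑ n ∈ Finset.Icc 1 N, (-1:ℝ)^(n+1) * Real.exp (n*u))
      + (-1:ℝ)^N * Real.exp ((N+1)*u) / (1 + Real.exp u) := by
  induction N with
  | zero => simp [sigmoid_eq]
  | succ N ih =>
      rw [ih]
      have h : Finset.Icc 1 (N+1) = insert (N+1) (Finset.Icc 1 N) := by
        rw [← Finset.insert_Icc_right_eq_Icc_add_one (by omega : 1 ≤ N+1)]
      rw [h, Finset.sum_insert (by simp)]
      have h3 : (0:ℝ) < 1 + Real.exp u := by positivity
      have key : (-1:ℝ)^N * Real.exp ((N+1)*u) / (1 + Real.exp u)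
          = (-1:ℝ)^(N+1+1) * Real.exp ((N+1)*u)
            + (-1:ℝ)^(N+1) * Real.exp ((N+1+1)*u) / (1 + Real.exp u) := by
        have he : Real.exp (((N:ℝ)+1+1)*u) = Real.exp (((N:ℝ)+1)*u) * Real.exp u := by
          rw [← Real.exp_add]; ring_nf
        push_cast
        rw [he]
        field_simp
        ring
      push_cast at key ⊢
      rw [key]
      ring

lemma sigmoid_remainder_bound (u : ℝ) (N : ℕ) :
    |sigmoid u - ∑ n ∈ Finset.Icc 1 N, (-1:ℝ)^(n+1) * Real.exp (n*u)|
      ≤ Real.exp ((N+1)*u) := by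
  rw [sigmoid_expansion u N]
  have h3 : (0:ℝ) < 1 + Real.exp u := by positivity
  have : (∑ n ∈ Finset.Icc 1 N, (-1:ℝ)^(n+1) * Real.exp (n*u))
      + (-1:ℝ)^N * Real.exp ((N+1)*u) / (1 + Real.exp u)
      - ∑ n ∈ Finset.Icc 1 N, (-1:ℝ)^(n+1) * Real.exp (n*u)
      = (-1:ℝ)^N * Real.exp ((N+1)*u) / (1 + Real.exp u) := by ring
  rw [this, abs_div, abs_mul, abs_pow, abs_neg, abs_one, one_pow, one_mul]
  rw [abs_of_pos (Real.exp_pos _), abs_of_pos h3]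
  rw [div_le_iff₀ h3]
  nlinarith [Real.exp_pos ((N+1)*u), Real.exp_pos u]



-- exp(δ t) → 0 as t → -∞, for δ > 0
lemma exp_mul_tendsto_zero {δ : ℝ} (hδ : 0 < δ) :
    Tendsto (fun t : ℝ => Real.exp (δ * t)) atBot (nhds 0) := by
  apply Real.tendsto_exp_atBot.comp
  exact Tendsto.const_mul_atBot hδ tendsto_id

-- limit + frequently zero ⇒ limit is zero  (over any filter with nontrivial... use atBot ℝ)
lemma limit_eq_zero_of_frequently_zero {α : Type*} {l : Filter α} [l.NeBot]
    {f : α → ℝ} {L : ℝ} (hf : Tendsto f l (nhds L))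
    (h0 : ∃ᶠ x in l, f x = 0) : L = 0 := by
  by_contra hL
  have h1 : ∀ᶠ x in l, f x ≠ 0 := by
    have := hf (Metric.ball_mem_nhds L (by simpa using abs_pos.mpr hL : (0:ℝ) < |L|))
    filter_upwards [this] with x hx
    intro h
    simp only [Set.mem_preimage, Metric.mem_ball, Real.dist_eq, h, zero_sub, abs_neg] at hx
    exact absurd hx (lt_irrefl _)
  exact (h1.and_frequently h0).exists.elim (fun _ h => h.1 h.2)

/-- Coefficient extraction for finite exponential sums dominated by `K e^{ν t}`. -/
lemma expCoeff {ι : Type*} [DecidableEq ι] (ν K : ℝ) :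
    ∀ (J : Finset ι) (μ c : ι → ℝ), (∀ j ∈ J, μ j < ν) →
    (∀ t : ℝ, t ≤ 0 → |∑ j ∈ J, c j * Real.exp (μ j * t)| ≤ K * Real.exp (ν * t)) →
    ∀ m : ℝ, ∑ j ∈ J.filter (fun j => μ j = m), c j = 0 := by
  intro J
  induction J using Finset.strongInduction with
  | _ J ih =>
    intro μ c hμ hb m
    rcases J.eq_empty_or_nonempty with rfl | hne
    · simp
    · -- the minimal frequency
      have hVne : (J.image μ).Nonempty := hne.image μ
      set A := (J.image μ).min' hVne with hA
      have hAmem : A ∈ J.image μ := Finset.min'_mem _ _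
      obtain ⟨j0, hj0J, hj0⟩ := Finset.mem_image.mp hAmem
      have hAle : ∀ j ∈ J, A ≤ μ j := fun j hj =>
        Finset.min'_le _ _ (Finset.mem_image_of_mem μ hj)
      have hAν : A < ν := hj0 ▸ hμ j0 hj0J
      -- S_A = 0 via limits
      have hSA : ∑ j ∈ J.filter (fun j => μ j = A), c j = 0 := by
        set F : ℝ → ℝ := fun t => ∑ j ∈ J, c j * Real.exp ((μ j - A) * t) with hF
        have hFlim : Tendsto F atBot
            (nhds (∑ j ∈ J, if μ j = A then c j else 0)) := by
          apply tendsto_finset_sum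
          intro j hj
          rcases eq_or_lt_of_le (hAle j hj) with h | h
          · simp only [← h, sub_self, zero_mul, Real.exp_zero, mul_one, if_pos rfl]
            exact tendsto_const_nhds
          · rw [if_neg (by linarith)]
            simpa using (exp_mul_tendsto_zero (by linarith : 0 < μ j - A)).const_mul (c j)
        have hF0 : Tendsto F atBot (nhds 0) := by
          apply squeeze_zero_norm' (a := fun t => K * Real.exp ((ν - A) * t))
          · filter_upwards [eventually_le_atBot (0:ℝ)] with t ht
            have h1 : F t = (∑ j ∈ J, c j * Real.exp (μ j * t)) * Real.exp (-(A*t)) := by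
              rw [Finset.sum_mul]
              apply Finset.sum_congr rfl
              intro j hj
              rw [mul_assoc, ← Real.exp_add]
              ring_nf
            rw [Real.norm_eq_abs, h1, abs_mul, abs_of_pos (Real.exp_pos _)]
            calc |∑ j ∈ J, c j * Real.exp (μ j * t)| * Real.exp (-(A*t))
                ≤ (K * Real.exp (ν * t)) * Real.exp (-(A*t)) := by
                  apply mul_le_mul_of_nonneg_right (hb t ht) (Real.exp_pos _).le
              _ = K * Real.exp ((ν - A) * t) := by
                  rw [mul_assoc, ← Real.exp_add]; ring_nf
          · simpa using (exp_mul_tendsto_zero (by linarith : 0 < ν - A)).const_mul K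
        have := tendsto_nhds_unique hFlim hF0
        rw [← this, Finset.sum_filter]
      -- recurse on smaller set
      have hsub : J.filter (fun j => μ j ≠ A) ⊂ J := by
        apply Finset.filter_ssubset.mpr
        exact ⟨j0, hj0J, by simp [hj0]⟩
      have hrec := ih _ hsub μ c
        (fun j hj => hμ j (Finset.mem_of_mem_filter j hj))
        (by
          intro t ht
          have heq : ∑ j ∈ J.filter (fun j => μ j ≠ A), c j * Real.exp (μ j * t)
              = ∑ j ∈ J, c j * Real.exp (μ j * t) := by
            rw [← Finset.sum_filter_add_sum_filter_not J (fun j => μ j = A)]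
            have : ∑ j ∈ J.filter (fun j => μ j = A), c j * Real.exp (μ j * t) = 0 := by
              calc ∑ j ∈ J.filter (fun j => μ j = A), c j * Real.exp (μ j * t)
                  = ∑ j ∈ J.filter (fun j => μ j = A), c j * Real.exp (A * t) := by
                    apply Finset.sum_congr rfl
                    intro j hj
                    rw [(Finset.mem_filter.mp hj).2]
                _ = (∑ j ∈ J.filter (fun j => μ j = A), c j) * Real.exp (A * t) := by
                    rw [Finset.sum_mul]
                _ = 0 := by rw [hSA, zero_mul]
            rw [this, zero_add]
          rw [heq]
          exact hb t ht)
      rcases eq_or_ne m A with rfl | hm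
      · exact hSA
      · have : J.filter (fun j => μ j = m)
            = (J.filter (fun j => μ j ≠ A)).filter (fun j => μ j = m) := by
          rw [Finset.filter_filter]
          apply Finset.filter_congr
          intro j hj
          constructor
          · intro h; exact ⟨h ▸ hm, h⟩
          · intro h; exact h.2
        rw [this]
        exact hrec m



lemma limit_eq_zero_of_frequently_zero' {f : ℕ → ℝ} {L : ℝ}
    (hf : Tendsto f atTop (nhds L)) (h0 : ∀ N : ℕ, ∃ n, N ≤ n ∧ f n = 0) : L = 0 := by
  by_contra hL
  obtain ⟨N, hN⟩ := (Metric.tendsto_atTop.mp hf) |L| (abs_pos.mpr hL)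
  obtain ⟨n, hn, hfn⟩ := h0 N
  have := hN n hn
  rw [hfn, Real.dist_eq, zero_sub, abs_neg] at this
  exact absurd this (lt_irrefl _)

/-- Vandermonde-type: if `∑ cᵢ zᵢⁿ = 0` for arbitrarily large `n`, with the `zᵢ`
positive and distinct, then all `cᵢ` vanish. -/
lemma vandermonde_limit {ι : Type*} [DecidableEq ι] :
    ∀ (W : Finset ι) (z c : ι → ℝ), (∀ i ∈ W, 0 < z i) →
    (∀ i ∈ W, ∀ j ∈ W, z i = z j → i = j) →
    (∀ N : ℕ, ∃ n, N ≤ n ∧ ∑ i ∈ W, c i * z i ^ n = 0) →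
    ∀ i ∈ W, c i = 0 := by
  intro W
  induction W using Finset.strongInduction with
  | _ W ih =>
    intro z c hz hinj hsum
    rcases W.eq_empty_or_nonempty with rfl | hne
    · simp
    · have hIm : (W.image z).Nonempty := hne.image z
      set Z := (W.image z).max' hIm with hZ
      obtain ⟨i0, hi0W, hi0⟩ := Finset.mem_image.mp (Finset.max'_mem _ hIm)
      rw [← hZ] at hi0
      have hZpos : 0 < Z := hi0 ▸ hz i0 hi0W
      have hlt : ∀ i ∈ W, i ≠ i0 → z i < Z := by
        intro i hi hne'
        rcases lt_or_eq_of_le (Finset.le_max' _ _ (Finset.mem_image_of_mem z hi)) with h | h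
        · exact h
        · exact absurd (hinj i hi i0 hi0W (h.trans hi0.symm)) hne'
      -- the normalized sequence tends to c i0
      have hlim : Tendsto (fun n : ℕ => ∑ i ∈ W, c i * (z i / Z) ^ n) atTop
          (nhds (c i0)) := by
        have : Tendsto (fun n : ℕ => ∑ i ∈ W, c i * (z i / Z) ^ n) atTop
            (nhds (∑ i ∈ W, if i = i0 then c i else 0)) := by
          apply tendsto_finset_sum
          intro i hi
          rcases eq_or_ne i i0 with rfl | hne'
          · rw [if_pos rfl, hi0, div_self (ne_of_gt hZpos)]
            simpa using tendsto_const_nhds (x := c i)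
          · rw [if_neg hne']
            have h1 : 0 ≤ z i / Z := le_of_lt (div_pos (hz i hi) hZpos)
            have h2 : z i / Z < 1 := (div_lt_one hZpos).mpr (hlt i hi hne')
            simpa using (tendsto_pow_atTop_nhds_zero_of_lt_one h1 h2).const_mul (c i)
        simpa [Finset.sum_ite_eq' W i0 c, hi0W] using this
      have hc0 : c i0 = 0 := by
        apply limit_eq_zero_of_frequently_zero' hlim
        intro N
        obtain ⟨n, hn, h0⟩ := hsum N
        refine ⟨n, hn, ?_⟩
        have : ∑ i ∈ W, c i * (z i / Z) ^ n
            = (∑ i ∈ W, c i * z i ^ n) / Z ^ n := by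
          rw [Finset.sum_div]
          exact Finset.sum_congr rfl fun i _ => by rw [div_pow, mul_div_assoc]
        rw [this, h0, zero_div]
      -- recurse
      have hss : W.erase i0 ⊂ W := Finset.erase_ssubset hi0W
      have hrec := ih _ hss z c (fun i hi => hz i (Finset.mem_of_mem_erase hi))
        (fun i hi j hj h => hinj i (Finset.mem_of_mem_erase hi) j (Finset.mem_of_mem_erase hj) h)
        (by
          intro N
          obtain ⟨n, hn, h0⟩ := hsum N
          refine ⟨n, hn, ?_⟩
          rw [← Finset.add_sum_erase W _ hi0W] at h0
          rw [← h0, hc0, zero_mul, zero_add])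
      intro i hi
      rcases eq_or_ne i i0 with rfl | hne'
      · exact hc0
      · exact hrec i (Finset.mem_erase.mpr ⟨hne', hi⟩)

lemma sigmoid_nonneg (u : ℝ) : 0 ≤ sigmoid u := by
  rw [sigmoid_eq]; positivity

lemma sigmoid_le_exp (u : ℝ) : sigmoid u ≤ Real.exp u := by
  rw [sigmoid_eq]
  rw [div_le_iff₀ (by positivity)]
  nlinarith [Real.exp_pos u]

lemma sigmoid_tendsto_zero : Tendsto sigmoid atBot (nhds 0) := by
  apply squeeze_zero_norm' (a := fun u => Real.exp u)
  · filter_upwards with u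
    rw [Real.norm_eq_abs, abs_of_nonneg (sigmoid_nonneg u)]
    exact sigmoid_le_exp u
  · exact Real.tendsto_exp_atBot

lemma affine_tendsto_atBot {α β : ℝ} (hα : 0 < α) :
    Tendsto (fun t : ℝ => α * t + β) atBot atBot := by
  apply tendsto_atBot_add_const_right
  exact Tendsto.const_mul_atBot hα tendsto_id

/-- At most one prime can satisfy `∃ n' ≥ 1, n' * αᵢ = p * A` when `αᵢ > A > 0`;
    hence we can pick arbitrarily large primes avoiding all such relations. -/
lemma good_prime_exists {ι : Type*} (S0 : Finset ι) (α : ι → ℝ) (A : ℝ) (hA : 0 < A)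
    (hgt : ∀ i ∈ S0, A < α i) :
    ∀ N : ℕ, ∃ n : ℕ, N ≤ n ∧ 1 ≤ n ∧
      ∀ i ∈ S0, ∀ n' : ℕ, 1 ≤ n' → (n' : ℝ) * α i ≠ (n : ℝ) * A := by
  classical
  set Bad : ι → ℕ → Prop := fun i n => ∃ n' : ℕ, 1 ≤ n' ∧ (n' : ℝ) * α i = (n : ℝ) * A
    with hBad
  have huniq : ∀ i ∈ S0, ∀ p q : ℕ, Nat.Prime p → Nat.Prime q → Bad i p → Bad i q →
      p = q := by
    intro i hi p q hp hq ⟨k, hk1, hk⟩ ⟨l, hl1, hl⟩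
    have hαpos : 0 < α i := lt_trans hA (hgt i hi)
    have hkq : (k * q : ℝ) * α i = (l * p : ℝ) * α i := by
      push_cast
      calc (k:ℝ) * q * α i = (q:ℝ) * ((k:ℝ) * α i) := by ring
        _ = (q:ℝ) * ((p:ℝ) * A) := by rw [hk]
        _ = (p:ℝ) * ((q:ℝ) * A) := by ring
        _ = (p:ℝ) * ((l:ℝ) * α i) := by rw [hl]
        _ = (l:ℝ) * p * α i := by ring
    have hkql : k * q = l * p := by
      have := mul_right_cancel₀ (ne_of_gt hαpos) hkq
      exact_mod_cast this
    have hkp : k < p := by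
      by_contra hkp
      push_neg at hkp
      have h1 : (p : ℝ) ≤ (k : ℝ) := by exact_mod_cast hkp
      have : (k:ℝ) * α i > (p:ℝ) * A := by
        have hk0 : (1:ℝ) ≤ (k:ℝ) := by exact_mod_cast hk1
        nlinarith [hgt i hi, hA]
      rw [hk] at this
      exact absurd this (lt_irrefl _)
    have hdvd : p ∣ k * q := ⟨l, by rw [hkql]; ring⟩
    rcases (Nat.Prime.dvd_mul hp).mp hdvd with h | h
    · exact absurd (Nat.le_of_dvd (by omega) h) (by omega)
    · exact (Nat.prime_dvd_prime_iff_eq hp hq).mp h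
  set P : ι → ℕ := fun i => if h : ∃ p, Nat.Prime p ∧ Bad i p then h.choose else 0 with hP
  intro N
  obtain ⟨p, hpge, hp⟩ := Nat.exists_infinite_primes (max N (S0.sup P + 1))
  refine ⟨p, le_trans (le_max_left _ _) hpge, hp.one_lt.le.trans' (by omega), ?_⟩
  intro i hi n' hn' heq
  have hbad : Bad i p := ⟨n', hn', heq⟩
  have hex : ∃ q, Nat.Prime q ∧ Bad i q := ⟨p, hp, hbad⟩
  have hPi : P i = hex.choose := by simp only [hP, dif_pos hex]
  have hspec := hex.choose_spec
  have : p = P i := by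
    rw [hPi]
    exact huniq i hi p hex.choose hp hspec.1 hbad hspec.2
  have hle : P i ≤ S0.sup P := Finset.le_sup hi
  omega

/-- Main 1D independence result. -/
lemma sigmoid_linear_indep {ι : Type*} [DecidableEq ι] (W : Finset ι)
    (α β c : ι → ℝ) (C : ℝ)
    (hα : ∀ i ∈ W, 0 < α i)
    (hinj : ∀ i ∈ W, ∀ j ∈ W, α i = α j → β i = β j → i = j)
    (h : ∀ t : ℝ, (∑ i ∈ W, c i * sigmoid (α i * t + β i)) + C = 0) :
    ∀ i ∈ W, c i = 0 := by
  classical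
  -- Step 0 : C = 0
  have hC : C = 0 := by
    have hlim : Tendsto (fun t : ℝ => (∑ i ∈ W, c i * sigmoid (α i * t + β i)) + C)
        atBot (nhds (0 + C)) := by
      apply Tendsto.add_const
      have : Tendsto (fun t : ℝ => ∑ i ∈ W, c i * sigmoid (α i * t + β i)) atBot
          (nhds (∑ i ∈ W, (0:ℝ))) := by
        apply tendsto_finset_sum
        intro i hi
        have := (sigmoid_tendsto_zero.comp (affine_tendsto_atBot (hα i hi) (β := β i))).const_mul (c i)
        simpa [Function.comp] using this
      simpa using this
    have h0 : Tendsto (fun _ : ℝ => (0:ℝ)) atBot (nhds 0) := tendsto_const_nhds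
    have := tendsto_nhds_unique
      (by simpa [h] using hlim : Tendsto (fun _ : ℝ => (0:ℝ)) atBot (nhds (0 + C))) h0
    linarith
  by_contra hcon
  push_neg at hcon
  obtain ⟨iBad, hiBadW, hiBad⟩ := hcon
  set S : Finset ι := W.filter (fun i => c i ≠ 0) with hS
  have hSne : S.Nonempty := ⟨iBad, Finset.mem_filter.mpr ⟨hiBadW, hiBad⟩⟩
  have hSsub : S ⊆ W := Finset.filter_subset _ _
  have hImne : (S.image α).Nonempty := hSne.image α
  set A : ℝ := (S.image α).min' hImne with hA
  obtain ⟨iA, hiAS, hiA⟩ := Finset.mem_image.mp (Finset.min'_mem _ hImne)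
  rw [← hA] at hiA
  have hApos : 0 < A := hiA ▸ hα iA (hSsub hiAS)
  have hAle : ∀ i ∈ S, A ≤ α i := fun i hi =>
    Finset.min'_le _ _ (Finset.mem_image_of_mem α hi)
  set S0 : Finset ι := S.filter (fun i => α i ≠ A) with hS0
  have hS0gt : ∀ i ∈ S0, A < α i := by
    intro i hi
    have h1 := Finset.mem_filter.mp hi
    exact lt_of_le_of_ne (hAle i h1.1) (Ne.symm h1.2)
  set T : Finset ι := W.filter (fun i => α i = A) with hT
  have key : ∀ N : ℕ, ∃ n, N ≤ n ∧ ∑ i ∈ T, c i * (Real.exp (β i)) ^ n = 0 := by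
    intro N
    obtain ⟨n, hnN, hn1, hgood⟩ := good_prime_exists S0 α A hApos hS0gt N
    refine ⟨n, hnN, ?_⟩
    set ν : ℝ := ((n : ℝ) + 1) * A with hν
    have hνpos : 0 < ν := by positivity
    have hνgt : (n : ℝ) * A < ν := by rw [hν]; nlinarith
    set Nt : ι → ℕ := fun i => ⌈ν / α i⌉₊ - 1 with hNt
    have hceil : ∀ i ∈ W, 1 ≤ ⌈ν / α i⌉₊ := by
      intro i hi
      exact Nat.ceil_pos.mpr (div_pos hνpos (hα i hi))
    have hfact1 : ∀ i ∈ W, ∀ n' ∈ Finset.Icc 1 (Nt i), (n' : ℝ) * α i < ν := by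
      intro i hi n' hn'
      have h2 := (Finset.mem_Icc.mp hn').2
      have h4 : n' < ⌈ν / α i⌉₊ := by
        have := hceil i hi
        simp only [hNt] at h2
        omega
      exact (lt_div_iff₀ (hα i hi)).mp (Nat.lt_ceil.mp h4)
    have hfact2 : ∀ i ∈ W, ν ≤ ((Nt i : ℝ) + 1) * α i := by
      intro i hi
      have h1 : Nt i + 1 = ⌈ν / α i⌉₊ := by
        have := hceil i hi
        simp only [hNt]
        omega
      have h2 : ν / α i ≤ ((Nt i : ℝ) + 1) := by
        rw [show ((Nt i : ℝ) + 1) = ((Nt i + 1 : ℕ) : ℝ) by push_cast; ring, h1]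
        exact Nat.le_ceil _
      exact (div_le_iff₀ (hα i hi)).mp h2
    have hfact3 : ∀ i ∈ W, α i = A → n ∈ Finset.Icc 1 (Nt i) := by
      intro i hi hαi
      rw [Finset.mem_Icc]
      refine ⟨hn1, ?_⟩
      have h2 := hfact2 i hi
      rw [hαi, hν] at h2
      have h3 : (n : ℝ) + 1 ≤ (Nt i : ℝ) + 1 := le_of_mul_le_mul_right (by linarith) hApos
      have h4 : (n : ℝ) ≤ (Nt i : ℝ) := by linarith
      exact_mod_cast h4
    set J : Finset ((_ : ι) × ℕ) := W.sigma (fun i => Finset.Icc 1 (Nt i)) with hJ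
    set μ : (_ : ι) × ℕ → ℝ := fun j => (j.2 : ℝ) * α j.1 with hμdef
    set dd : (_ : ι) × ℕ → ℝ := fun j => (-1 : ℝ)^(j.2+1) * c j.1 * Real.exp ((j.2 : ℝ) * β j.1)
      with hdd
    set K : ℝ := ∑ i ∈ W, |c i| * Real.exp (((Nt i : ℝ) + 1) * β i) with hK
    have hμlt : ∀ j ∈ J, μ j < ν := by
      intro j hj
      have := Finset.mem_sigma.mp hj
      exact hfact1 j.1 this.1 j.2 this.2
    have hbound : ∀ t : ℝ, t ≤ 0 →
        |∑ j ∈ J, dd j * Real.exp (μ j * t)| ≤ K * Real.exp (ν * t) := by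
      intro t ht
      have hsum : ∑ j ∈ J, dd j * Real.exp (μ j * t)
          = ∑ i ∈ W, c i * (∑ n' ∈ Finset.Icc 1 (Nt i),
              (-1:ℝ)^(n'+1) * Real.exp ((n' : ℝ) * (α i * t + β i))) := by
        rw [hJ, Finset.sum_sigma]
        apply Finset.sum_congr rfl
        intro i _
        rw [Finset.mul_sum]
        apply Finset.sum_congr rfl
        intro n' _
        simp only [hdd, hμdef]
        rw [mul_assoc, ← Real.exp_add]
        ring_nf
      have hrem : ∑ j ∈ J, dd j * Real.exp (μ j * t)
          = - ∑ i ∈ W, c i * (sigmoid (α i * t + β i)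
              - ∑ n' ∈ Finset.Icc 1 (Nt i),
                  (-1:ℝ)^(n'+1) * Real.exp ((n' : ℝ) * (α i * t + β i))) := by
        rw [hsum]
        have h1 := h t
        rw [hC, add_zero] at h1
        calc ∑ i ∈ W, c i * (∑ n' ∈ Finset.Icc 1 (Nt i),
                (-1:ℝ)^(n'+1) * Real.exp ((n' : ℝ) * (α i * t + β i)))
            = ∑ i ∈ W, (c i * sigmoid (α i * t + β i)
              - c i * (sigmoid (α i * t + β i)
                - ∑ n' ∈ Finset.Icc 1 (Nt i),
                    (-1:ℝ)^(n'+1) * Real.exp ((n' : ℝ) * (α i * t + β i)))) := by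
              apply Finset.sum_congr rfl; intro i _; ring
          _ = (∑ i ∈ W, c i * sigmoid (α i * t + β i))
              - ∑ i ∈ W, c i * (sigmoid (α i * t + β i)
                - ∑ n' ∈ Finset.Icc 1 (Nt i),
                    (-1:ℝ)^(n'+1) * Real.exp ((n' : ℝ) * (α i * t + β i))) := by
              rw [Finset.sum_sub_distrib]
          _ = - ∑ i ∈ W, c i * (sigmoid (α i * t + β i)
                - ∑ n' ∈ Finset.Icc 1 (Nt i),
                    (-1:ℝ)^(n'+1) * Real.exp ((n' : ℝ) * (α i * t + β i))) := by
              rw [h1]; ring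
      rw [hrem, abs_neg]
      calc |∑ i ∈ W, c i * (sigmoid (α i * t + β i)
              - ∑ n' ∈ Finset.Icc 1 (Nt i),
                  (-1:ℝ)^(n'+1) * Real.exp ((n' : ℝ) * (α i * t + β i)))|
          ≤ ∑ i ∈ W, |c i * (sigmoid (α i * t + β i)
              - ∑ n' ∈ Finset.Icc 1 (Nt i),
                  (-1:ℝ)^(n'+1) * Real.exp ((n' : ℝ) * (α i * t + β i)))| :=
            Finset.abs_sum_le_sum_abs _ _
        _ ≤ ∑ i ∈ W, |c i| * Real.exp (((Nt i : ℝ) + 1) * β i) * Real.exp (ν * t) := by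
            apply Finset.sum_le_sum
            intro i hi
            rw [abs_mul]
            have hb1 := sigmoid_remainder_bound (α i * t + β i) (Nt i)
            have hb2 : Real.exp (((Nt i:ℝ)+1) * (α i * t + β i))
                = Real.exp (((Nt i:ℝ)+1) * β i) * Real.exp ((((Nt i:ℝ)+1) * α i) * t) := by
              rw [← Real.exp_add]; ring_nf
            have hb3 : Real.exp ((((Nt i:ℝ)+1) * α i) * t) ≤ Real.exp (ν * t) := by
              apply Real.exp_le_exp.mpr
              exact mul_le_mul_of_nonpos_right (hfact2 i hi) ht
            calc |c i| * |sigmoid (α i * t + β i)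
                  - ∑ n' ∈ Finset.Icc 1 (Nt i),
                      (-1:ℝ)^(n'+1) * Real.exp ((n' : ℝ) * (α i * t + β i))|
                ≤ |c i| * Real.exp (((Nt i:ℝ)+1) * (α i * t + β i)) := by
                  apply mul_le_mul_of_nonneg_left _ (abs_nonneg _)
                  exact hb1
              _ = |c i| * Real.exp (((Nt i:ℝ)+1) * β i) * Real.exp ((((Nt i:ℝ)+1) * α i) * t) := by
                  rw [hb2]; ring
              _ ≤ |c i| * Real.exp (((Nt i:ℝ)+1) * β i) * Real.exp (ν * t) := by
                  apply mul_le_mul_of_nonneg_left hb3 (by positivity)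
        _ = K * Real.exp (ν * t) := by rw [hK, Finset.sum_mul]
    have hzero := expCoeff ν K J μ dd hμlt hbound ((n : ℝ) * A)
    -- compute the fiber sum
    have hfiber : ∑ j ∈ J.filter (fun j => μ j = (n : ℝ) * A), dd j
        = (-1:ℝ)^(n+1) * ∑ i ∈ T, c i * Real.exp ((n : ℝ) * β i) := by
      rw [Finset.sum_filter, hJ, Finset.sum_sigma]
      have hpt : ∀ i ∈ W, (∑ n' ∈ Finset.Icc 1 (Nt i),
            if μ ⟨i, n'⟩ = (n : ℝ) * A then dd ⟨i, n'⟩ else 0)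
          = (if α i = A then (-1:ℝ)^(n+1) * (c i * Real.exp ((n : ℝ) * β i)) else 0) := by
        intro i hi
        by_cases hαi : α i = A
        · rw [if_pos hαi]
          have hcond : ∀ n' : ℕ, (μ ⟨i, n'⟩ = (n : ℝ) * A) ↔ n' = n := by
            intro n'
            simp only [hμdef, hαi]
            constructor
            · intro hh
              have : (n' : ℝ) = (n : ℝ) := mul_right_cancel₀ (ne_of_gt hApos) hh
              exact_mod_cast this
            · intro hh; rw [hh]
          calc (∑ n' ∈ Finset.Icc 1 (Nt i),
                if μ ⟨i, n'⟩ = (n : ℝ) * A then dd ⟨i, n'⟩ else 0)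
              = ∑ n' ∈ Finset.Icc 1 (Nt i), if n' = n then dd ⟨i, n'⟩ else 0 := by
                apply Finset.sum_congr rfl
                intro n' _
                rw [if_congr (hcond n') rfl rfl]
            _ = if n ∈ Finset.Icc 1 (Nt i) then dd ⟨i, n⟩ else 0 := Finset.sum_ite_eq' _ _ _
            _ = dd ⟨i, n⟩ := by rw [if_pos (hfact3 i hi hαi)]
            _ = (-1:ℝ)^(n+1) * (c i * Real.exp ((n : ℝ) * β i)) := by
                simp only [hdd]; ring
        · rw [if_neg hαi]
          by_cases hci : c i = 0
          · apply Finset.sum_eq_zero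
            intro n' _
            simp only [hdd, hci]
            simp
          · have hiS0 : i ∈ S0 := by
              rw [hS0, hS]
              simp only [Finset.mem_filter]
              exact ⟨⟨hi, hci⟩, hαi⟩
            apply Finset.sum_eq_zero
            intro n' hn'
            rw [if_neg]
            exact hgood i hiS0 n' (Finset.mem_Icc.mp hn').1
        done
      rw [Finset.sum_congr rfl hpt, ← Finset.sum_filter, ← hT, Finset.mul_sum]
    rw [hfiber] at hzero
    have hne : ((-1:ℝ)^(n+1)) ≠ 0 := by
      apply pow_ne_zero; norm_num
    have := (mul_eq_zero.mp hzero).resolve_left hne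
    calc ∑ i ∈ T, c i * (Real.exp (β i)) ^ n
        = ∑ i ∈ T, c i * Real.exp ((n : ℝ) * β i) := by
          apply Finset.sum_congr rfl
          intro i _
          rw [← Real.exp_nat_mul]
      _ = 0 := this
  -- Vandermonde
  have hvdm := vandermonde_limit T (fun i => Real.exp (β i)) c
    (fun i _ => Real.exp_pos _)
    (by
      intro i hi j hj hz
      have h1 := Finset.mem_filter.mp hi
      have h2 := Finset.mem_filter.mp hj
      exact hinj i h1.1 j h2.1 (h1.2.trans h2.2.symm) (Real.exp_injective hz))
    key
  have hiAT : iA ∈ T := Finset.mem_filter.mpr ⟨hSsub hiAS, hiA⟩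
  exact (Finset.mem_filter.mp hiAS).2 (hvdm iA hiAT)

lemma sigmoid_coeff_zero {ι : Type*} [DecidableEq ι] (W : Finset ι)
    (α β c : ι → ℝ) (C : ℝ)
    (hα : ∀ i ∈ W, 0 < α i)
    (h : ∀ t : ℝ, (∑ i ∈ W, c i * sigmoid (α i * t + β i)) + C = 0)
    (i₀ : ι) (hi₀ : i₀ ∈ W)
    (huniq : ∀ j ∈ W, j ≠ i₀ → ¬(α j = α i₀ ∧ β j = β i₀)) :
    c i₀ = 0 := by
  classical
  set P : Finset (ℝ × ℝ) := W.image (fun i => (α i, β i)) with hP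
  set c' : ℝ × ℝ → ℝ := fun p => ∑ i ∈ W.filter (fun i => (α i, β i) = p), c i with hc'
  have hmaps : ∀ i ∈ W, (α i, β i) ∈ P := fun i hi => Finset.mem_image_of_mem _ hi
  have hiden : ∀ t : ℝ, (∑ p ∈ P, c' p * sigmoid (p.1 * t + p.2)) + C = 0 := by
    intro t
    have h1 : ∑ p ∈ P, c' p * sigmoid (p.1 * t + p.2)
        = ∑ p ∈ P, ∑ i ∈ W.filter (fun i => (α i, β i) = p),
            c i * sigmoid (α i * t + β i) := by
      apply Finset.sum_congr rfl
      intro p _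
      rw [hc', Finset.sum_mul]
      apply Finset.sum_congr rfl
      intro i hi
      have := (Finset.mem_filter.mp hi).2
      rw [← this]
    rw [h1, Finset.sum_fiberwise_of_maps_to hmaps]
    exact h t
  have hα' : ∀ p ∈ P, 0 < p.1 := by
    intro p hp
    obtain ⟨i, hi, rfl⟩ := Finset.mem_image.mp hp
    exact hα i hi
  have hall := sigmoid_linear_indep P (fun p => p.1) (fun p => p.2) c' C hα'
    (fun p _ q _ h1 h2 => Prod.ext h1 h2) hiden
  have hp₀ : (α i₀, β i₀) ∈ P := hmaps i₀ hi₀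
  have := hall _ hp₀
  have hfib : W.filter (fun i => (α i, β i) = (α i₀, β i₀)) = {i₀} := by
    apply Finset.eq_singleton_iff_unique_mem.mpr
    constructor
    · exact Finset.mem_filter.mpr ⟨hi₀, rfl⟩
    · intro j hj
      have h1 := Finset.mem_filter.mp hj
      by_contra hne
      exact huniq j h1.1 hne ⟨congrArg Prod.fst h1.2, congrArg Prod.snd h1.2⟩
  rw [hc'] at this
  simp only [hfib, Finset.sum_singleton] at this
  exact this

/-- Coefficient vanishing, for σ = sigmoid or tanh. -/
lemma activation_coeff_zero {ι : Type*} [DecidableEq ι]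
    (σ : ℝ → ℝ) (hσ : σ = sigmoid ∨ σ = Real.tanh) (W : Finset ι)
    (α β c : ι → ℝ) (C : ℝ)
    (hα : ∀ i ∈ W, 0 < α i)
    (h : ∀ t : ℝ, (∑ i ∈ W, c i * σ (α i * t + β i)) + C = 0)
    (i₀ : ι) (hi₀ : i₀ ∈ W)
    (huniq : ∀ j ∈ W, j ≠ i₀ → ¬(α j = α i₀ ∧ β j = β i₀)) :
    c i₀ = 0 := by
  rcases hσ with rfl | rfl
  · exact sigmoid_coeff_zero W α β c C hα h i₀ hi₀ huniq
  · -- tanh u = 2 * sigmoid (2u) - 1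
    have h2 : ∀ t : ℝ, (∑ i ∈ W, (2 * c i) * sigmoid ((2 * α i) * t + 2 * β i))
        + (C - ∑ i ∈ W, c i) = 0 := by
      intro t
      have h1 := h t
      have h3 : ∑ i ∈ W, c i * Real.tanh (α i * t + β i)
          = ∑ i ∈ W, ((2 * c i) * sigmoid ((2 * α i) * t + 2 * β i) - c i) := by
        apply Finset.sum_congr rfl
        intro i _
        rw [tanh_eq_sigmoid]
        ring_nf
      rw [h3, Finset.sum_sub_distrib] at h1
      linarith
    have := sigmoid_coeff_zero W (fun i => 2 * α i) (fun i => 2 * β i) (fun i => 2 * c i)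
      (C - ∑ i ∈ W, c i) (fun i hi => by linarith [hα i hi])
      h2 i₀ hi₀
      (by
        intro j hj hne hcon
        exact huniq j hj hne ⟨by linarith [hcon.1], by linarith [hcon.2]⟩)
    linarith


lemma dotp_zero_left {d : ℕ} (x : Fin d → ℝ) : dotp 0 x = 0 := by
  unfold dotp; simp

lemma dotp_smul_left {d : ℕ} (r : ℝ) (a x : Fin d → ℝ) : dotp (r • a) x = r * dotp a x := by
  unfold dotp
  rw [Finset.mul_sum]
  apply Finset.sum_congr rfl
  intro i _
  simp [mul_assoc]

lemma dotp_sub_left {d : ℕ} (a b x : Fin d → ℝ) : dotp (a - b) x = dotp a x - dotp b x := by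
  unfold dotp
  rw [← Finset.sum_sub_distrib]
  apply Finset.sum_congr rfl
  intro i _
  simp [sub_mul]

lemma dotp_addright {d : ℕ} (a x y : Fin d → ℝ) : dotp a (x + y) = dotp a x + dotp a y := by
  unfold dotp
  rw [← Finset.sum_add_distrib]
  apply Finset.sum_congr rfl
  intro i _
  simp [mul_add]

lemma dotp_smul_right {d : ℕ} (r : ℝ) (a x : Fin d → ℝ) : dotp a (r • x) = r * dotp a x := by
  unfold dotp
  rw [Finset.mul_sum]
  apply Finset.sum_congr rfl
  intro i _
  simp; ring

lemma dotp_self_pos {d : ℕ} (a : Fin d → ℝ) (ha : a ≠ 0) : 0 < dotp a a := by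
  rcases Function.ne_iff.mp ha with ⟨i, hi⟩
  unfold dotp
  have : (0:ℝ) < a i * a i := mul_self_pos.mpr (by simpa using hi)
  apply Finset.sum_pos' (fun j _ => mul_self_nonneg (a j)) ⟨i, Finset.mem_univ i, this⟩

/-- A direction avoiding finitely many hyperplanes. -/
lemma exists_generic_direction {d : ℕ} (L : Finset (Fin d → ℝ)) :
    ∃ v : Fin d → ℝ, ∀ w ∈ L, w ≠ 0 → dotp w v ≠ 0 := by
  classical
  induction L using Finset.induction_on with
  | empty => exact ⟨0, by simp⟩
  | @insert w L hw ih =>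
    obtain ⟨v, hv⟩ := ih
    by_cases hw0 : w = 0
    · refine ⟨v, ?_⟩
      intro u hu hu0
      rcases Finset.mem_insert.mp hu with rfl | huL
      · exact absurd hw0 hu0
      · exact hv u huL hu0
    · have hww : dotp w w ≠ 0 := ne_of_gt (dotp_self_pos w hw0)
      set B : Finset ℝ :=
        insert (-(dotp w v)/(dotp w w)) (L.image (fun y => -(dotp y v)/(dotp y w))) with hB
      obtain ⟨t, ht⟩ := Infinite.exists_notMem_finset B
      refine ⟨v + t • w, ?_⟩
      intro u hu hu0
      have hexp : dotp u (v + t • w) = dotp u v + t * dotp u w := by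
        rw [dotp_addright, dotp_smul_right]
      rcases Finset.mem_insert.mp hu with rfl | huL
      · intro hcon
        rw [hexp] at hcon
        have hww' : dotp u u ≠ 0 := hww
        have htval : t = -(dotp u v)/(dotp u u) := by
          field_simp
          linarith
        apply ht
        rw [hB, htval]
        exact Finset.mem_insert_self _ _
      · by_cases huw : dotp u w = 0
        · rw [hexp, huw, mul_zero, add_zero]
          exact hv u huL hu0
        · intro hcon
          rw [hexp] at hcon
          have : t = -(dotp u v)/(dotp u w) := by
            field_simp
            linarith
          apply ht
          rw [hB, this]
          exact Finset.mem_insert_of_mem (Finset.mem_image_of_mem _ huL)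

lemma dotp_add_left {d : ℕ} (a b x : Fin d → ℝ) : dotp (a + b) x = dotp a x + dotp b x := by
  unfold dotp
  rw [← Finset.sum_add_distrib]
  apply Finset.sum_congr rfl
  intro i _
  simp [add_mul]

lemma reduce_drop {d n : ℕ} (σ : ℝ → ℝ) (a : Fin (n+1) → Fin d → ℝ)
    (b s : Fin (n+1) → ℝ) (c : ℝ) (k : Fin (n+1)) (hk : s k • a k = 0) :
    ∃ (a' : Fin n → Fin d → ℝ) (b' s' : Fin n → ℝ) (c' : ℝ),
      ∀ x, shallowNet σ a' b' s' c' x = shallowNet σ a b s c x := by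
  rcases smul_eq_zero.mp hk with hs | ha
  · refine ⟨a ∘ k.succAbove, b ∘ k.succAbove, s ∘ k.succAbove, c, ?_⟩
    intro x
    unfold shallowNet
    rw [Fin.sum_univ_succAbove (fun j => s j * σ (dotp (a j) x + b j)) k, hs]
    simp [Function.comp]
  · refine ⟨a ∘ k.succAbove, b ∘ k.succAbove, s ∘ k.succAbove, c + s k * σ (b k), ?_⟩
    intro x
    unfold shallowNet
    rw [Fin.sum_univ_succAbove (fun j => s j * σ (dotp (a j) x + b j)) k, ha, dotp_zero_left]
    simp [Function.comp]
    ring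

lemma reduce_merge {d n : ℕ} (σ : ℝ → ℝ) (hσ : σ = sigmoid ∨ σ = Real.tanh)
    (a : Fin (n+1) → Fin d → ℝ) (b s : Fin (n+1) → ℝ) (c : ℝ)
    (k1 k2 : Fin (n+1)) (hne : k1 ≠ k2) (ε : ℝ) (hε : ε = 1 ∨ ε = -1)
    (ha : a k1 = ε • a k2) (hb : b k1 = ε * b k2) :
    ∃ (a' : Fin n → Fin d → ℝ) (b' s' : Fin n → ℝ) (c' : ℝ),
      ∀ x, shallowNet σ a' b' s' c' x = shallowNet σ a b s c x := by
  classical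
  obtain ⟨i₂, hi₂⟩ := Fin.exists_succAbove_eq (show k2 ≠ k1 from Ne.symm hne)
  set κ : ℝ := if ε = 1 then 0 else 2 * σ 0 with hκ
  have hkey : ∀ u : ℝ, σ (ε * u) = κ + ε * σ u := by
    intro u
    rcases hε with rfl | rfl
    · simp [hκ]
    · rw [hκ, if_neg (by norm_num)]
      have := sigma_neg hσ u
      rw [show (-1 : ℝ) * u = -u by ring, this]
      ring
  refine ⟨a ∘ k1.succAbove, b ∘ k1.succAbove,
    (fun i => if k1.succAbove i = k2 then s k2 + ε * s k1 else s (k1.succAbove i)),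
    c + κ * s k1, ?_⟩
  intro x
  unfold shallowNet
  rw [Fin.sum_univ_succAbove (fun j => s j * σ (dotp (a j) x + b j)) k1]
  have hsplit : ∑ i : Fin n, (if k1.succAbove i = k2 then s k2 + ε * s k1 else s (k1.succAbove i))
        * σ (dotp ((a ∘ k1.succAbove) i) x + (b ∘ k1.succAbove) i)
      = (∑ i : Fin n, s (k1.succAbove i) * σ (dotp (a (k1.succAbove i)) x + b (k1.succAbove i)))
        + ε * s k1 * σ (dotp (a k2) x + b k2) := by
    have h1 : ∀ i : Fin n,
        (if k1.succAbove i = k2 then s k2 + ε * s k1 else s (k1.succAbove i))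
          * σ (dotp ((a ∘ k1.succAbove) i) x + (b ∘ k1.succAbove) i)
        = s (k1.succAbove i) * σ (dotp (a (k1.succAbove i)) x + b (k1.succAbove i))
          + (if i = i₂ then ε * s k1 * σ (dotp (a k2) x + b k2) else 0) := by
      intro i
      by_cases hik : i = i₂
      · subst hik
        rw [if_pos hi₂, if_pos rfl]
        simp only [Function.comp_apply, hi₂]
        ring
      · have : k1.succAbove i ≠ k2 := by
          intro hcon
          exact hik (Fin.succAbove_right_injective (hcon.trans hi₂.symm))
        rw [if_neg this, if_neg hik]
        simp only [Function.comp_apply, add_zero]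
    rw [Finset.sum_congr rfl (fun i _ => h1 i), Finset.sum_add_distrib,
      Finset.sum_ite_eq' Finset.univ i₂
        (fun _ => ε * s k1 * σ (dotp (a k2) x + b k2)), if_pos (Finset.mem_univ i₂)]
  rw [hsplit]
  have hu : dotp (a k1) x + b k1 = ε * (dotp (a k2) x + b k2) := by
    rw [ha, hb, dotp_smul_left]
    ring
  rw [hu, hkey]
  ring

lemma admissible_implies_irreducible {d m : ℕ} (σ : ℝ → ℝ)
    (hσ : σ = sigmoid ∨ σ = Real.tanh)
    (a : Fin m → Fin d → ℝ) (b s : Fin m → ℝ) (c : ℝ)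
    (h1 : ∀ k, s k • a k ≠ 0)
    (h2 : ∀ ε : ℝ, (ε = 1 ∨ ε = -1) → ∀ k1 k2 : Fin m, k1 ≠ k2 →
        ¬ (a k1 = ε • a k2 ∧ b k1 = ε * b k2)) :
    IrreducibleShallow σ m (shallowNet σ a b s c) := by
  classical
  rintro ⟨m', hm', a', b', s', c', heq⟩
  have hs_ne : ∀ k, s k ≠ 0 := by
    intro k hk
    exact h1 k (by rw [hk, zero_smul])
  have ha_ne : ∀ k, a k ≠ 0 := by
    intro k hk
    exact h1 k (by rw [hk, smul_zero])
  -- generic direction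
  set L : Finset (Fin d → ℝ) :=
    ((Finset.univ.image a) ∪ (Finset.univ.image a'))
      ∪ (((Finset.univ ×ˢ Finset.univ).image (fun p : Fin m × Fin m => a p.1 - a p.2))
        ∪ ((Finset.univ ×ˢ Finset.univ).image (fun p : Fin m × Fin m => a p.1 + a p.2)))
    with hL
  obtain ⟨v, hv⟩ := exists_generic_direction L
  have hmem_a : ∀ k, a k ∈ L := by
    intro k
    rw [hL]
    apply Finset.mem_union_left
    apply Finset.mem_union_left
    exact Finset.mem_image_of_mem a (Finset.mem_univ k)
  have hmem_a' : ∀ j, a' j ∈ L := by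
    intro j
    rw [hL]
    apply Finset.mem_union_left
    apply Finset.mem_union_right
    exact Finset.mem_image_of_mem a' (Finset.mem_univ j)
  have hmem_sub : ∀ k1 k2, a k1 - a k2 ∈ L := by
    intro k1 k2
    rw [hL]
    apply Finset.mem_union_right
    apply Finset.mem_union_left
    exact Finset.mem_image.mpr ⟨(k1, k2), by simp, rfl⟩
  have hmem_add : ∀ k1 k2, a k1 + a k2 ∈ L := by
    intro k1 k2
    rw [hL]
    apply Finset.mem_union_right
    apply Finset.mem_union_right
    exact Finset.mem_image.mpr ⟨(k1, k2), by simp, rfl⟩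
  have hva : ∀ k, dotp (a k) v ≠ 0 := fun k => hv (a k) (hmem_a k) (ha_ne k)
  -- combined family
  set αb : (Fin m ⊕ Fin m') → ℝ :=
    Sum.elim (fun k => dotp (a k) v) (fun j => dotp (a' j) v) with hαb
  set βb : (Fin m ⊕ Fin m') → ℝ := Sum.elim b b' with hβb
  set cb : (Fin m ⊕ Fin m') → ℝ := Sum.elim s (fun j => -s' j) with hcb
  -- 1D identity over the full sum type
  have hid0 : ∀ t : ℝ,
      (∑ i : Fin m ⊕ Fin m', cb i * σ (αb i * t + βb i)) + (c - c') = 0 := by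
    intro t
    have h := heq (t • v)
    unfold shallowNet at h
    simp only [dotp_smul_right] at h
    rw [Fintype.sum_sum_type]
    simp only [hαb, hβb, hcb, Sum.elim_inl, Sum.elim_inr]
    have hc1 : ∑ k, s k * σ (dotp (a k) v * t + b k)
        = ∑ k, s k * σ (t * dotp (a k) v + b k) :=
      Finset.sum_congr rfl (fun k _ => by rw [mul_comm (dotp (a k) v) t])
    have hc2 : ∑ j, (- s' j) * σ (dotp (a' j) v * t + b' j)
        = - ∑ j, s' j * σ (t * dotp (a' j) v + b' j) := by
      rw [← Finset.sum_neg_distrib]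
      exact Finset.sum_congr rfl (fun j _ => by rw [mul_comm (dotp (a' j) v) t]; ring)
    rw [hc1, hc2]
    linarith [h]
  -- restrict to nonzero slopes
  set W : Finset (Fin m ⊕ Fin m') := Finset.univ.filter (fun i => αb i ≠ 0) with hW
  set C₀ : ℝ := (c - c')
    + ∑ i ∈ Finset.univ.filter (fun i => ¬ αb i ≠ 0), cb i * σ (βb i) with hC₀
  have hid1 : ∀ t : ℝ, (∑ i ∈ W, cb i * σ (αb i * t + βb i)) + C₀ = 0 := by
    intro t
    have h := hid0 t
    rw [← Finset.sum_filter_add_sum_filter_not Finset.univ (fun i => αb i ≠ 0)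
      (fun i => cb i * σ (αb i * t + βb i))] at h
    have hz : ∑ i ∈ Finset.univ.filter (fun i => ¬ αb i ≠ 0), cb i * σ (αb i * t + βb i)
        = ∑ i ∈ Finset.univ.filter (fun i => ¬ αb i ≠ 0), cb i * σ (βb i) := by
      apply Finset.sum_congr rfl
      intro i hi
      have h0 : αb i = 0 := not_not.mp (Finset.mem_filter.mp hi).2
      rw [h0, zero_mul, zero_add]
    rw [hz] at h
    rw [hC₀, hW]
    linarith [h]
  -- sign normalization
  set αn : (Fin m ⊕ Fin m') → ℝ := fun i => |αb i| with hαn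
  set βn : (Fin m ⊕ Fin m') → ℝ := fun i => if 0 < αb i then βb i else -βb i with hβn
  set cn : (Fin m ⊕ Fin m') → ℝ := fun i => if 0 < αb i then cb i else -cb i with hcn
  set γ : (Fin m ⊕ Fin m') → ℝ := fun i => if 0 < αb i then 0 else 2 * σ 0 * cb i with hγ
  have hnorm : ∀ i ∈ W, ∀ t : ℝ,
      cb i * σ (αb i * t + βb i) = cn i * σ (αn i * t + βn i) + γ i := by
    intro i hi t
    have hne0 : αb i ≠ 0 := (Finset.mem_filter.mp hi).2
    by_cases hpos : 0 < αb i
    · simp only [hαn, hβn, hcn, hγ, if_pos hpos, abs_of_pos hpos, add_zero]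
    · have hneg : αb i < 0 := lt_of_le_of_ne (le_of_not_gt hpos) hne0
      simp only [hαn, hβn, hcn, hγ, if_neg hpos, abs_of_neg hneg]
      have harg : -αb i * t + -βb i = -(αb i * t + βb i) := by ring
      rw [harg, sigma_neg hσ]
      ring
  have hid2 : ∀ t : ℝ,
      (∑ i ∈ W, cn i * σ (αn i * t + βn i)) + (C₀ + ∑ i ∈ W, γ i) = 0 := by
    intro t
    have h := hid1 t
    have hs : ∑ i ∈ W, cb i * σ (αb i * t + βb i)
        = (∑ i ∈ W, cn i * σ (αn i * t + βn i)) + ∑ i ∈ W, γ i := by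
      rw [← Finset.sum_add_distrib]
      exact Finset.sum_congr rfl (fun i hi => hnorm i hi t)
    rw [hs] at h
    linarith [h]
  have hαnpos : ∀ i ∈ W, 0 < αn i := by
    intro i hi
    exact abs_pos.mpr (Finset.mem_filter.mp hi).2
  -- class map, injectivity on our neurons
  set cls : (Fin m ⊕ Fin m') → ℝ × ℝ := fun i => (αn i, βn i) with hcls
  have hinjl : ∀ k1 k2 : Fin m, cls (Sum.inl k1) = cls (Sum.inl k2) → k1 = k2 := by
    intro k1 k2 hEq
    by_contra hne12
    have hα12 : |dotp (a k1) v| = |dotp (a k2) v| := congrArg Prod.fst hEq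
    have hβ12 : (if 0 < dotp (a k1) v then b k1 else -b k1)
        = (if 0 < dotp (a k2) v then b k2 else -b k2) := congrArg Prod.snd hEq
    rcases abs_eq_abs.mp hα12 with hee | hee
    · -- same sign : ε = 1
      have hsgn : (0 < dotp (a k1) v) ↔ (0 < dotp (a k2) v) := by rw [hee]
      have hbb : b k1 = b k2 := by
        by_cases h0 : 0 < dotp (a k1) v
        · rw [if_pos h0, if_pos (hsgn.mp h0)] at hβ12; exact hβ12
        · rw [if_neg h0, if_neg (fun hc => h0 (hsgn.mpr hc))] at hβ12; linarith
      have haa : a k1 = a k2 := by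
        by_contra hcon
        have hd : dotp (a k1 - a k2) v = 0 := by
          rw [dotp_sub_left]; linarith
        exact hv _ (hmem_sub k1 k2) (sub_ne_zero.mpr hcon) hd
      exact h2 1 (Or.inl rfl) k1 k2 hne12 ⟨by rw [one_smul]; exact haa, by rw [one_mul]; exact hbb⟩
    · -- opposite sign : ε = -1
      have hne2 : dotp (a k2) v ≠ 0 := hva k2
      have hsgn : (0 < dotp (a k1) v) ↔ ¬ (0 < dotp (a k2) v) := by
        constructor
        · intro hp hq; rw [hee] at hp; linarith
        · intro hq
          rw [hee]
          rcases lt_or_gt_of_ne hne2 with hlt | hgt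
          · linarith
          · exact absurd hgt hq
      have hbb : b k1 = -b k2 := by
        by_cases h0 : 0 < dotp (a k1) v
        · rw [if_pos h0, if_neg (hsgn.mp h0)] at hβ12; exact hβ12
        · have h2' : 0 < dotp (a k2) v := by
            by_contra hq
            exact h0 (hsgn.mpr hq)
          rw [if_neg h0, if_pos h2'] at hβ12; linarith
      have haa : a k1 = -a k2 := by
        by_contra hcon
        have hd : dotp (a k1 + a k2) v = 0 := by
          rw [dotp_add_left]; linarith
        have : a k1 + a k2 ≠ 0 := by
          intro hc
          exact hcon (by rw [← neg_eq_of_add_eq_zero_left hc])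
        exact hv _ (hmem_add k1 k2) this hd
      exact h2 (-1) (Or.inr rfl) k1 k2 hne12
        ⟨by rw [neg_one_smul]; exact haa, by rw [neg_one_mul]; exact hbb⟩
  -- pigeonhole
  have hinj_fun : Function.Injective (fun k => cls (Sum.inl k)) := fun k1 k2 h => hinjl k1 k2 h
  set theirCls : Finset (ℝ × ℝ) :=
    ((Finset.univ : Finset (Fin m')).filter (fun j => αb (Sum.inr j) ≠ 0)).image
      (fun j => cls (Sum.inr j)) with htheir
  have hcard1 : (Finset.univ.image (fun k => cls (Sum.inl k))).card = m := by
    rw [Finset.card_image_of_injective _ hinj_fun, Finset.card_univ, Fintype.card_fin]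
  have hcard2 : theirCls.card ≤ m' := by
    calc theirCls.card ≤ _ := Finset.card_image_le
      _ ≤ (Finset.univ : Finset (Fin m')).card := Finset.card_filter_le _ _
      _ = m' := by rw [Finset.card_univ, Fintype.card_fin]
  have hnsub : ¬ (Finset.univ.image (fun k => cls (Sum.inl k)) ⊆ theirCls) := by
    intro hsub
    have := Finset.card_le_card hsub
    omega
  obtain ⟨p, hp_mem, hp_not⟩ := Finset.not_subset.mp hnsub
  obtain ⟨kstar, _, hkstar⟩ := Finset.mem_image.mp hp_mem
  have hi₀W : Sum.inl kstar ∈ W := by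
    rw [hW]
    refine Finset.mem_filter.mpr ⟨Finset.mem_univ _, ?_⟩
    simp only [hαb, Sum.elim_inl]
    exact hva kstar
  have hcz := activation_coeff_zero σ hσ W αn βn cn (C₀ + ∑ i ∈ W, γ i) hαnpos hid2
    (Sum.inl kstar) hi₀W
    (by
      intro j hj hne hcon
      have hclseq : cls j = cls (Sum.inl kstar) := by
        rw [hcls]
        exact Prod.ext hcon.1 hcon.2
      cases j with
      | inl k' =>
          exact hne (by rw [hinjl k' kstar hclseq])
      | inr j' =>
          apply hp_not
          rw [← hkstar, ← hclseq]
          apply Finset.mem_image_of_mem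
          refine Finset.mem_filter.mpr ⟨Finset.mem_univ _, ?_⟩
          exact (Finset.mem_filter.mp hj).2)
  -- conclude s kstar = 0, contradiction
  have : s kstar = 0 := by
    simp only [hcn, hcb, hαb, Sum.elim_inl] at hcz
    by_cases h0 : 0 < dotp (a kstar) v
    · simp only [h0, ↓reduceIte] at hcz; exact hcz
    · simp only [h0, ↓reduceIte] at hcz; linarith
  exact hs_ne kstar this

end AuxiliaryLemmas

/-- For `σ = Sigmoid` or `σ = tanh`, a shallow analytic network is admissible if and
only if it is irreducible. -/
theorem stmt9 {d m : ℕ} (σ : ℝ → ℝ) (hσ : σ = sigmoid ∨ σ = Real.tanh)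
    (a : Fin m → Fin d → ℝ) (b s : Fin m → ℝ) (c : ℝ) :
    ((∀ k, s k • a k ≠ 0) ∧
      (∀ ε : ℝ, (ε = 1 ∨ ε = -1) → ∀ k1 k2 : Fin m, k1 ≠ k2 →
        ¬ (a k1 = ε • a k2 ∧ b k1 = ε * b k2))) ↔
    IrreducibleShallow σ m (shallowNet σ a b s c) := by
  constructor
  · rintro ⟨h1, h2⟩
    exact admissible_implies_irreducible σ hσ a b s c h1 h2
  · intro hirr
    by_contra hnadm
    apply hirr
    rcases not_and_or.mp hnadm with hA | hB
    · push_neg at hA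
      obtain ⟨k, hk⟩ := hA
      cases m with
      | zero => exact k.elim0
      | succ n =>
        obtain ⟨a', b', s', c', heq⟩ := reduce_drop σ a b s c k hk
        exact ⟨n, Nat.lt_succ_self n, a', b', s', c', heq⟩
    · push_neg at hB
      obtain ⟨ε, hε, k1, k2, hne, ha, hb⟩ := hB
      cases m with
      | zero => exact k1.elim0
      | succ n =>
        obtain ⟨a', b', s', c', heq⟩ := reduce_merge σ hσ a b s c k1 k2 hne ε hε ha hb
        exact ⟨n, Nat.lt_succ_self n, a', b', s', c', heq⟩
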